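/- arXiv:2301.12353 — 4 statements merged into one kernel-verified Lean document; each statement's English description precedes it below -/
import Mathlib

section
/- Fix δ ∈ (0,1) and an integer n ≥ 2, and for each k ∈ {0,1,…,n−1} let h_k be as follows: h_k(x) = σ((k/δ)(x−k+δ)) − σ((k/δ)(x−k)) + σ((k/δ)(−x+k+1)) − σ((k/δ)(−x+k+1−δ)) − k. Then for every k ∈ {0,1,…,n−1} and every x ∈ [k, k+1−δ], the sum ∑_{i=0}^{n−1} h_i(x) equals ⌊x⌋ = k. -/
/-- The ReLU function. -/
noncomputable def relu (t : ℝ) : ℝ := max 0 t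

/-- The piecewise "bump" function `h_k` from the paper. -/
noncomputable def hk (δ : ℝ) (k : ℕ) (x : ℝ) : ℝ :=
  relu ((k / δ) * (x - k + δ)) - relu ((k / δ) * (x - k))
    + relu ((k / δ) * (-x + k + 1)) - relu ((k / δ) * (-x + k + 1 - δ)) - k

/-! On `[i - δ, i + 1]` the bump `hk δ i` is a trapezoid rising from `0` to `i` on
`[i - δ, i]`, flat at height `i` on `[i, i + 1 - δ]` and falling back to `0` on
`[i + 1 - δ, i + 1]`; it vanishes outside.
On `[k, k + 1 - δ]` only the `k`-th bump is nonzero, so the sum equals `k = ⌊x⌋`. -/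

theorem relu_of_nonneg {t : ℝ} (h : 0 ≤ t) : relu t = t := max_eq_right h

theorem relu_of_nonpos {t : ℝ} (h : t ≤ 0) : relu t = 0 := max_eq_left h

section Bump

variable {δ : ℝ} {i : ℕ} {x : ℝ}

theorem hk_of_le_sub (hδ : 0 < δ) (hx : x ≤ i - δ) : hk δ i x = 0 := by
  have hc : 0 ≤ (i : ℝ) / δ := by positivity
  rw [hk, relu_of_nonpos (mul_nonpos_of_nonneg_of_nonpos hc (by linarith)),
    relu_of_nonpos (mul_nonpos_of_nonneg_of_nonpos hc (by linarith)),
    relu_of_nonneg (mul_nonneg hc (by linarith)), relu_of_nonneg (mul_nonneg hc (by linarith))]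
  field_simp
  ring

theorem hk_of_add_one_le (hδ : 0 < δ) (hx : i + 1 ≤ x) : hk δ i x = 0 := by
  have hc : 0 ≤ (i : ℝ) / δ := by positivity
  rw [hk, relu_of_nonneg (mul_nonneg hc (by linarith)),
    relu_of_nonneg (mul_nonneg hc (by linarith)),
    relu_of_nonpos (mul_nonpos_of_nonneg_of_nonpos hc (by linarith)),
    relu_of_nonpos (mul_nonpos_of_nonneg_of_nonpos hc (by linarith))]
  field_simp
  ring

theorem hk_of_mem_Icc (hδ : 0 < δ) (hx : x ∈ Set.Icc (i : ℝ) (i + 1 - δ)) :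
    hk δ i x = i := by
  obtain ⟨hx₁, hx₂⟩ := hx
  have hc : 0 ≤ (i : ℝ) / δ := by positivity
  rw [hk, relu_of_nonneg (mul_nonneg hc (by linarith)),
    relu_of_nonneg (mul_nonneg hc (by linarith)),
    relu_of_nonneg (mul_nonneg hc (by linarith)), relu_of_nonneg (mul_nonneg hc (by linarith))]
  field_simp
  ring

theorem hk_of_mem_Icc_of_ne (hδ : 0 < δ) {k : ℕ} (hx : x ∈ Set.Icc (k : ℝ) (k + 1 - δ))
    (hik : i ≠ k) : hk δ i x = 0 := by
  obtain ⟨hx₁, hx₂⟩ := hx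
  rcases hik.lt_or_gt with hlt | hgt
  · have : (i : ℝ) + 1 ≤ k := by exact_mod_cast hlt
    exact hk_of_add_one_le hδ (by linarith)
  · have : (k : ℝ) + 1 ≤ i := by exact_mod_cast hgt
    exact hk_of_le_sub hδ (by linarith)

end Bump

theorem sum_range_hk_of_mem_Icc {δ x : ℝ} (hδ : 0 < δ) {n k : ℕ} (hkn : k < n)
    (hx : x ∈ Set.Icc (k : ℝ) (k + 1 - δ)) : ∑ i ∈ Finset.range n, hk δ i x = k := by
  rw [Finset.sum_eq_single_of_mem k (Finset.mem_range.mpr hkn)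
    fun i _ hik => hk_of_mem_Icc_of_ne hδ hx hik]
  exact hk_of_mem_Icc hδ hx

theorem floor_eq_of_mem_Icc {δ x : ℝ} (hδ : 0 < δ) {k : ℕ}
    (hx : x ∈ Set.Icc (k : ℝ) (k + 1 - δ)) : ⌊x⌋ = (k : ℤ) :=
  Int.floor_eq_iff.mpr ⟨by push_cast; exact hx.1, by push_cast; linarith [hx.2]⟩

theorem stmt_9_general (δ : ℝ) (hδ : δ ∈ Set.Ioo (0 : ℝ) 1) (n : ℕ)
    (k : ℕ) (hk' : k < n) :
    ∀ x ∈ Set.Icc (k : ℝ) (k + 1 - δ),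
      (∑ i ∈ Finset.range n, hk δ i x) = k ∧ ⌊x⌋ = (k : ℤ) := fun _ hx =>
  ⟨sum_range_hk_of_mem_Icc hδ.1 hk' hx, floor_eq_of_mem_Icc hδ.1 hx⟩

theorem stmt_9 (δ : ℝ) (hδ : δ ∈ Set.Ioo (0 : ℝ) 1) (n : ℕ) (hn : 2 ≤ n)
    (k : ℕ) (hk' : k < n) :
    ∀ x ∈ Set.Icc (k : ℝ) (k + 1 - δ),
      (∑ i ∈ Finset.range n, hk δ i x) = k ∧ ⌊x⌋ = (k : ℤ) :=
  stmt_9_general δ hδ n k hk'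
end

section
/- Let r ∈ ℕ⁺, δ = 2^{−r}, and define T : ℝ → ℝ by T(x) = σ(x/δ + 1) − σ(x/δ), where σ is ReLU. Then for any θ₁,…,θ_r ∈ {0,1} and each i ∈ {1,…,r}, letting β_i = ∑_{j=i}^{r} θ_j 2^{−(j−i+1)} (the binary number 0.θ_i…θ_r), one has T(β_i − 1/2) = θ_i. -/
/-!
Write `β_i = θ_i / 2 + R` with tail `R = ∑_{j > i} θ_j 2^{-(j-i+1)}`. Comparing with the
geometric series gives `0 ≤ R ≤ 1/2 - 2^{-(r-i+1)} ≤ 1/2 - δ`. Hence `β_i - 1/2 ≥ 0` when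
`θ_i = 1` and `β_i - 1/2 ≤ -δ` when `θ_i = 0`; on these two ranges `T` equals `1` and `0`.
-/

open Finset

noncomputable def reluStep (δ x : ℝ) : ℝ := max 0 (x / δ + 1) - max 0 (x / δ)

lemma reluStep_of_nonneg {δ x : ℝ} (hδ : 0 ≤ δ) (hx : 0 ≤ x) : reluStep δ x = 1 := by
  have : 0 ≤ x / δ := div_nonneg hx hδ
  rw [reluStep, max_eq_right this, max_eq_right (by linarith)]
  ring

lemma reluStep_of_le_neg {δ x : ℝ} (hδ : 0 < δ) (hx : x ≤ -δ) : reluStep δ x = 0 := by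
  have : x / δ ≤ -1 := by rwa [div_le_iff₀ hδ, neg_one_mul]
  rw [reluStep, max_eq_left (by linarith), max_eq_left (by linarith)]
  ring

lemma sum_Ioc_one_div_two_pow {i r : ℕ} (h : i ≤ r) :
    ∑ j ∈ Ioc i r, (1 : ℝ) / 2 ^ (j - i + 1) = 1 / 2 - 1 / 2 ^ (r - i + 1) := by
  induction r, h using Nat.le_induction with
  | base => simp
  | succ n hin ih =>
    rw [sum_Ioc_succ_top hin, ih, show n + 1 - i + 1 = (n - i + 1) + 1 by omega, pow_succ]
    ring

section BinaryTail

variable {θ : ℕ → ℝ} {i r : ℕ}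

lemma sum_Ioc_digit_div_two_pow_nonneg (hθ : ∀ j ∈ Ioc i r, 0 ≤ θ j) :
    0 ≤ ∑ j ∈ Ioc i r, θ j / 2 ^ (j - i + 1) :=
  sum_nonneg fun j hj => div_nonneg (hθ j hj) (by positivity)

lemma sum_Ioc_digit_div_two_pow_le (h : i ≤ r) (hθ : ∀ j ∈ Ioc i r, θ j ≤ 1) :
    ∑ j ∈ Ioc i r, θ j / 2 ^ (j - i + 1) ≤ 1 / 2 - 1 / 2 ^ (r - i + 1) := by
  rw [← sum_Ioc_one_div_two_pow h]
  exact sum_le_sum fun j hj => div_le_div_of_nonneg_right (hθ j hj) (by positivity)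

end BinaryTail

theorem stmt_11_general (r : ℕ) (θ : ℕ → ℝ)
    (hθ : ∀ j, 1 ≤ j → j ≤ r → θ j = 0 ∨ θ j = 1) :
    ∀ i, 1 ≤ i → i ≤ r →
      (let δ : ℝ := 1 / 2 ^ r
       let T : ℝ → ℝ := fun x => max 0 (x / δ + 1) - max 0 (x / δ)
       let β : ℝ := ∑ j ∈ Finset.Icc i r, θ j / 2 ^ (j - i + 1)
       T (β - 1/2) = θ i) := by
  intro i hi hir
  show reluStep (1 / 2 ^ r) (∑ j ∈ Icc i r, θ j / 2 ^ (j - i + 1) - 1 / 2) = θ i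
  set R := ∑ j ∈ Ioc i r, θ j / 2 ^ (j - i + 1)
  have hdigit : ∀ j ∈ Ioc i r, 0 ≤ θ j ∧ θ j ≤ 1 := fun j hj => by
    rcases hθ j (by grind) (mem_Ioc.mp hj).2 with h | h <;> simp [h]
  have hR_nonneg : 0 ≤ R := sum_Ioc_digit_div_two_pow_nonneg fun j hj => (hdigit j hj).1
  have hR_le : R ≤ 1 / 2 - 1 / 2 ^ r := by
    have hδ : (1 : ℝ) / 2 ^ r ≤ 1 / 2 ^ (r - i + 1) :=
      one_div_pow_le_one_div_pow_of_le one_le_two (by omega)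
    linarith [sum_Ioc_digit_div_two_pow_le hir fun j hj => (hdigit j hj).2]
  rw [← add_sum_Ioc_eq_sum_Icc hir, Nat.sub_self, zero_add, pow_one]
  rcases hθ i hi hir with h | h <;> rw [h]
  · exact reluStep_of_le_neg (by positivity) (by linarith)
  · exact reluStep_of_nonneg (by positivity) (by linarith)

theorem stmt_11 (r : ℕ) (hr : 0 < r) (θ : ℕ → ℝ)
    (hθ : ∀ j, 1 ≤ j → j ≤ r → θ j = 0 ∨ θ j = 1) :
    ∀ i, 1 ≤ i → i ≤ r →
      (let δ : ℝ := 1 / 2 ^ r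
       let T : ℝ → ℝ := fun x => max 0 (x / δ + 1) - max 0 (x / δ)
       let β : ℝ := ∑ j ∈ Finset.Icc i r, θ j / 2 ^ (j - i + 1)
       T (β - 1/2) = θ i) :=
  stmt_11_general r θ hθ
end

section
/- Let r ∈ ℕ⁺, θ₁,…,θ_r ∈ {0,1}, and for i ∈ {1,…,r} set β_i = ∑_{j=i}^{r} θ_j 2^{−(j−i+1)}, with β_{r+1} = 0. With δ = 2^{−r} and T(x) = σ(x/δ + 1) − σ(x/δ), one has β_{i+1} = 2β_i − T(β_i − 1/2) for every i ∈ {1,…,r}. -/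
lemma geo_aux (n : ℕ) : ∑ j ∈ Finset.range n, (1:ℝ)/2^(j+1) = 1 - (1/2)^n := by
  induction n with
  | zero => simp
  | succ n ih => rw [Finset.sum_range_succ, ih]; simp only [one_div, ← inv_pow]; ring

theorem stmt_12 (r : ℕ) (hr : 0 < r) (θ : ℕ → ℝ)
    (hθ : ∀ j, 1 ≤ j → j ≤ r → θ j = 0 ∨ θ j = 1) :
    ∀ i, 1 ≤ i → i ≤ r →
      (let δ : ℝ := 1 / 2 ^ r
       let T : ℝ → ℝ := fun x => max 0 (x / δ + 1) - max 0 (x / δ)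
       let β : ℕ → ℝ := fun m => ∑ j ∈ Finset.Icc m r, θ j / 2 ^ (j - m + 1)
       β (i + 1) = 2 * β i - T (β i - 1/2)) := by
  intro i h1 hir δ T β
  have hsucc : β (i+1) = ∑ j ∈ Finset.range (r - i), θ (i + 1 + j) / 2 ^ (j + 1) := by
    simp only [β]
    rw [← Finset.Ico_add_one_right_eq_Icc, Finset.sum_Ico_eq_sum_range]
    apply Finset.sum_congr (by congr 1 <;> omega)
    intro j _
    congr 2
    omega
  have hkey : β i = θ i / 2 + β (i+1) / 2 := by
    have hA : β i = ∑ j ∈ Finset.range (r + 1 - i), θ (i + j) / 2 ^ (j + 1) := by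
      simp only [β]
      rw [← Finset.Ico_add_one_right_eq_Icc, Finset.sum_Ico_eq_sum_range]
      apply Finset.sum_congr (by congr 1 <;> omega)
      intro j _
      congr 2
      omega
    rw [hA, hsucc, show r + 1 - i = (r - i) + 1 from by omega, Finset.sum_range_succ',
      add_comm]
    congr 1
    · norm_num
    · rw [Finset.sum_div]
      apply Finset.sum_congr rfl
      intro j _
      rw [show i + (j + 1) = i + 1 + j from by omega]
      ring
  have hδpos : (0:ℝ) < δ := by positivity
  have hnn : 0 ≤ β (i+1) := by
    rw [hsucc]
    apply Finset.sum_nonneg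
    intro j hj
    simp only [Finset.mem_range] at hj
    rcases hθ (i+1+j) (by omega) (by omega) with h | h <;> rw [h] <;> positivity
  have hub : β (i+1) ≤ 1 - 2 * δ := by
    have h1' : β (i+1) ≤ ∑ j ∈ Finset.range (r - i), (1:ℝ)/2^(j+1) := by
      rw [hsucc]
      apply Finset.sum_le_sum
      intro j hj
      simp only [Finset.mem_range] at hj
      rcases hθ (i+1+j) (by omega) (by omega) with h | h <;> rw [h]
      rw [zero_div]; positivity
    rw [geo_aux] at h1'
    have h2' : ((1:ℝ)/2)^(r-1) ≤ (1/2)^(r-i) := by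
      apply pow_le_pow_of_le_one (by norm_num) (by norm_num)
      omega
    have h3' : 2 * δ = ((1:ℝ)/2)^(r-1) := by
      have hrr : (2:ℝ)^r = 2^(r-1) * 2 := by
        rw [← pow_succ]; congr 1; omega
      have h2pos : (0:ℝ) < 2^(r-1) := by positivity
      simp only [δ, hrr, one_div, div_pow, one_pow]
      rw [mul_inv]
      field_simp
      all_goals (rw [← mul_pow]; norm_num)
    linarith
  rcases hθ i h1 hir with h | h
  · have hx : β i - 1/2 = (β (i+1) - 1) / 2 := by rw [hkey, h]; ring
    have harg : (β i - 1/2) / δ ≤ -1 := by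
      rw [hx, div_le_iff₀ hδpos]
      nlinarith
    have hT : T (β i - 1/2) = 0 := by
      simp only [T]
      rw [max_eq_left (by linarith), max_eq_left (by linarith)]
      ring
    rw [hT, hkey, h]; ring
  · have hx : β i - 1/2 = β (i+1) / 2 := by rw [hkey, h]; ring
    have harg : 0 ≤ (β i - 1/2) / δ := by
      rw [hx]; positivity
    have hT : T (β i - 1/2) = 1 := by
      simp only [T]
      rw [max_eq_right (by linarith), max_eq_right (by linarith)]
      ring
    rw [hT, hkey, h]; ring
end

section
/- Let f ∈ C([0,1]^d) and suppose g : ℝ^d → ℝ satisfies |g(x) − f(x)| ≤ ε for all x ∈ [0,1]^d \ Ω([0,1]^d, K, δ), where K ∈ ℕ⁺, δ ∈ (0, 1/(3K)], and Ω([0,1]^d,K,δ) is the trifling region. Define φ₀ = g and φ_{i+1}(x) = mid(φ_i(x − δe_{i+1}), φ_i(x), φ_i(x + δe_{i+1})) for i = 0,…,d−1, where mid returns the middle value of three inputs and {e_i} is the standard basis of ℝ^d. Then φ = φ_d satisfies |φ(x) − f(x)| ≤ ε + d·ω_f(δ) for all x ∈ [0,1]^d. -/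
/-- The unit cube `[0,1]^d` in Euclidean space. -/
def unitCube (d : ℕ) : Set (EuclideanSpace ℝ (Fin d)) :=
  {x | ∀ i, x i ∈ Set.Icc (0 : ℝ) 1}

/-- Modulus of continuity of `f` on `[0,1]^d` with respect to the Euclidean norm. -/
noncomputable def modulus (d : ℕ) (f : EuclideanSpace ℝ (Fin d) → ℝ) (t : ℝ) : ℝ :=
  sSup {r : ℝ | ∃ x ∈ unitCube d, ∃ y ∈ unitCube d, ‖x - y‖ ≤ t ∧ r = |f x - f y|}

/-- The trifling region `Ω([0,1]^d, K, δ)`. -/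
def trifling (d K : ℕ) (δ : ℝ) : Set (EuclideanSpace ℝ (Fin d)) :=
  ⋃ j : Fin d,
    {x ∈ unitCube d | x j ∈ ⋃ k ∈ Finset.Ico 1 K, Set.Ioo ((k : ℝ) / K - δ) ((k : ℝ) / K)}

/-- The middle (median) value of three real numbers. -/
noncomputable def mid (a b c : ℝ) : ℝ := max (min a b) (min (max a b) c)

/-- The iterated "mid" construction `φ_i` from the paper. -/
noncomputable def phiIter (d : ℕ) (δ : ℝ) (g : EuclideanSpace ℝ (Fin d) → ℝ) :
    ℕ → EuclideanSpace ℝ (Fin d) → ℝ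
  | 0 => g
  | (i + 1) => fun x =>
      if h : i < d then
        mid (phiIter d δ g i (x - δ • EuclideanSpace.single (⟨i, h⟩ : Fin d) 1))
            (phiIter d δ g i x)
            (phiIter d δ g i (x + δ • EuclideanSpace.single (⟨i, h⟩ : Fin d) 1))
      else phiIter d δ g i x

/-
Call `t ∈ [0,1]` good if it avoids the one-dimensional trifling set, a union of intervals of
length `δ` separated from each other and from `0` and `1` by gaps of length at least `2δ`. Hence
at most one of `t - δ, t, t + δ` is bad. By induction on `i`, `φ_i` is within `ε + i ω_f(δ)` of
`f` at every point of the cube whose coordinates `i+1, …, d` are good. In the step, at least two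
of the points `x - δe_{i+1}, x, x + δe_{i+1}` have a good `(i+1)`-st coordinate, so there `φ_i`
is within `ε + i ω_f(δ) + ω_f(δ)` of `f x`; and the median of three numbers, two of which lie in
an interval, lies in that interval. At `i = d` no coordinate is constrained.
-/open Set
open scoped Interval

theorem mid_mem_uIcc_left (a b c : ℝ) : mid a b c ∈ [[a, b]] := by
  simp only [mid, mem_uIcc]; grind

theorem mid_mem_uIcc_right (a b c : ℝ) : mid a b c ∈ [[b, c]] := by
  simp only [mid, mem_uIcc]; grind

theorem mid_mem_uIcc_outer (a b c : ℝ) : mid a b c ∈ [[a, c]] := by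
  simp only [mid, mem_uIcc]; grind

theorem Set.OrdConnected.mid_mem {s : Set ℝ} (hs : s.OrdConnected) {a b c : ℝ}
    (h : (a ∈ s ∧ b ∈ s) ∨ (a ∈ s ∧ c ∈ s) ∨ (b ∈ s ∧ c ∈ s)) : mid a b c ∈ s := by
  rcases h with ⟨ha, hb⟩ | ⟨ha, hc⟩ | ⟨hb, hc⟩
  · exact hs.uIcc_subset ha hb (mid_mem_uIcc_left a b c)
  · exact hs.uIcc_subset ha hc (mid_mem_uIcc_outer a b c)
  · exact hs.uIcc_subset hb hc (mid_mem_uIcc_right a b c)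

def triflingReal (K : ℕ) (δ : ℝ) : Set ℝ :=
  ⋃ k ∈ Finset.Ico 1 K, Ioo ((k : ℝ) / K - δ) ((k : ℝ) / K)

theorem mem_trifling {d K : ℕ} {δ : ℝ} {x : EuclideanSpace ℝ (Fin d)} :
    x ∈ trifling d K δ ↔ x ∈ unitCube d ∧ ∃ j, x j ∈ triflingReal K δ := by
  simp only [trifling, triflingReal, mem_iUnion, mem_ofPred_eq, exists_and_left]

section triflingReal

variable {K : ℕ} {δ : ℝ}

theorem mem_triflingReal {u : ℝ} :
    u ∈ triflingReal K δ ↔ ∃ k : ℕ, 1 ≤ k ∧ k < K ∧ (k : ℝ) / K - δ < u ∧ u < (k : ℝ) / K := by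
  simp only [triflingReal, mem_iUnion, Finset.mem_Ico, mem_Ioo, exists_prop, and_assoc]

theorem triflingReal_subset_Ioo : triflingReal K δ ⊆ Ioo (1 / K - δ) (1 - 1 / K) := by
  intro u hu
  obtain ⟨k, hk, hkK, hku, huk⟩ := mem_triflingReal.mp hu
  have hK : (0 : ℝ) < K := Nat.cast_pos.mpr (by omega)
  have h₁ : (1 : ℝ) / K ≤ k / K := by gcongr; exact_mod_cast hk
  have h₂ : (k : ℝ) / K ≤ 1 - 1 / K := by
    rw [one_sub_div hK.ne', div_le_div_iff_of_pos_right hK, le_sub_iff_add_le]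
    exact_mod_cast hkK
  exact ⟨by linarith, by linarith⟩

/-- The intervals of `triflingReal K δ` have length `δ` and gaps of length `1 / K - δ ≥ 2 * δ`. -/
theorem triflingReal_sub_notMem_Icc (hδ : 3 * δ ≤ 1 / K) {u v : ℝ}
    (hu : u ∈ triflingReal K δ) (hv : v ∈ triflingReal K δ) : v - u ∉ Icc δ (2 * δ) := by
  rintro ⟨h₁, h₂⟩
  obtain ⟨k, -, hkK, hku, huk⟩ := mem_triflingReal.mp hu
  obtain ⟨m, -, -, hmv, hvm⟩ := mem_triflingReal.mp hv
  have hK : (0 : ℝ) < K := Nat.cast_pos.mpr (by omega)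
  have hkm : k + 1 ≤ m := by
    have : (k : ℝ) / K < m / K := by linarith
    exact_mod_cast (div_lt_div_iff_of_pos_right hK).mp this
  have : (k : ℝ) / K + 1 / K ≤ m / K := by
    rw [← add_div]; gcongr; exact_mod_cast hkm
  linarith

theorem left_or_right_mem_Icc_diff_triflingReal (hK : 0 < K) (hδ : 3 * δ ≤ 1 / K) {t u v : ℝ}
    (ht : t ∈ Icc (0 : ℝ) 1) (hut : u ≤ t) (htv : t ≤ v) (huv : v - u ∈ Icc δ (2 * δ)) :
    u ∈ Icc 0 1 \ triflingReal K δ ∨ v ∈ Icc 0 1 \ triflingReal K δ := by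
  have hK₁ : 1 / (K : ℝ) ≤ 1 := by
    rw [div_le_one (by exact_mod_cast hK)]; exact_mod_cast hK
  obtain ⟨h₁, h₂⟩ := huv
  obtain ⟨ht₀, ht₁⟩ := ht
  by_contra! hbad
  simp only [mem_sdiff, mem_Icc, not_and_or, not_le, not_not] at hbad
  obtain ⟨(hu | hu) | hu, (hv | hv) | hv⟩ := hbad <;> try linarith
  · linarith [(triflingReal_subset_Ioo hv).1]
  · linarith [(triflingReal_subset_Ioo hu).2]
  · exact triflingReal_sub_notMem_Icc hδ hu hv ⟨h₁, h₂⟩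

theorem two_of_three_mem_Icc_diff_triflingReal (hK : 0 < K) (hδ₀ : 0 ≤ δ)
    (hδ : 3 * δ ≤ 1 / K) {t : ℝ} (ht : t ∈ Icc (0 : ℝ) 1) :
    let G := Icc 0 1 \ triflingReal K δ
    (t - δ ∈ G ∧ t ∈ G) ∨ (t - δ ∈ G ∧ t + δ ∈ G) ∨ (t ∈ G ∧ t + δ ∈ G) := by
  have pair u v := @left_or_right_mem_Icc_diff_triflingReal K δ hK hδ t u v ht
  have h₁ := pair (t - δ) t (sub_le_self t hδ₀) le_rfl ⟨by linarith, by linarith⟩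
  have h₂ := pair t (t + δ) le_rfl (le_add_of_nonneg_right hδ₀) ⟨by linarith, by linarith⟩
  have h₃ := pair (t - δ) (t + δ) (sub_le_self t hδ₀) (le_add_of_nonneg_right hδ₀)
    ⟨by linarith, by linarith⟩
  tauto

end triflingReal

theorem isCompact_unitCube (d : ℕ) : IsCompact (unitCube d) := by
  have : unitCube d = EuclideanSpace.equiv (Fin d) ℝ ⁻¹' univ.pi fun _ => Icc 0 1 := by
    ext x; simp only [unitCube, mem_ofPred_eq, mem_preimage, mem_univ_pi]; rfl
  rw [this]
  exact (EuclideanSpace.equiv (Fin d) ℝ).toHomeomorph.isCompact_preimage.mpr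
    (isCompact_univ_pi fun _ => isCompact_Icc)

theorem abs_sub_le_modulus {d : ℕ} {f : EuclideanSpace ℝ (Fin d) → ℝ}
    (hf : ContinuousOn f (unitCube d)) {t : ℝ} {x y : EuclideanSpace ℝ (Fin d)}
    (hx : x ∈ unitCube d) (hy : y ∈ unitCube d) (hxy : ‖x - y‖ ≤ t) :
    |f x - f y| ≤ modulus d f t := by
  have hbdd : BddAbove ((fun p => |f p.1 - f p.2|) '' unitCube d ×ˢ unitCube d) :=
    ((isCompact_unitCube d).prod (isCompact_unitCube d)).bddAbove_image
      ((hf.comp continuousOn_fst fun _ hp => hp.1).sub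
        (hf.comp continuousOn_snd fun _ hp => hp.2)).abs
  refine le_csSup (hbdd.mono ?_) ⟨x, hx, y, hy, hxy, rfl⟩
  rintro r ⟨x, hx, y, hy, -, rfl⟩
  exact ⟨(x, y), ⟨hx, hy⟩, rfl⟩

theorem add_smul_single_apply {ι : Type*} [DecidableEq ι] (x : EuclideanSpace ℝ ι) (σ : ℝ)
    (i j : ι) : (x + σ • EuclideanSpace.single i 1 : EuclideanSpace ℝ ι) j =
      if j = i then x i + σ else x j := by
  split_ifs with h <;> simp [h]

section phiIter

variable {d K : ℕ} {δ : ℝ} {f g : EuclideanSpace ℝ (Fin d) → ℝ}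

theorem phiIter_succ_of_lt {i : ℕ} (hi : i < d) (x : EuclideanSpace ℝ (Fin d)) :
    phiIter d δ g (i + 1) x =
      let ψ := fun σ : ℝ => phiIter d δ g i (x + σ • EuclideanSpace.single ⟨i, hi⟩ 1)
      mid (ψ (-δ)) (ψ 0) (ψ δ) := by
  simp [phiIter, hi, sub_eq_add_neg]

theorem abs_phiIter_succ_sub_le (hK : 0 < K) (hδ₀ : 0 ≤ δ) (hδ : 3 * δ ≤ 1 / K) {ω B : ℝ}
    (hf : ∀ x ∈ unitCube d, ∀ y ∈ unitCube d, ‖x - y‖ ≤ δ → |f x - f y| ≤ ω) {i : ℕ}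
    (hi : i < d) (ih : ∀ y ∈ unitCube d, (∀ j : Fin d, i ≤ j → y j ∉ triflingReal K δ) →
      |phiIter d δ g i y - f y| ≤ B)
    {x : EuclideanSpace ℝ (Fin d)} (hx : x ∈ unitCube d)
    (hgood : ∀ j : Fin d, i + 1 ≤ j → x j ∉ triflingReal K δ) :
    |phiIter d δ g (i + 1) x - f x| ≤ B + ω := by
  set e := EuclideanSpace.single (⟨i, hi⟩ : Fin d) (1 : ℝ)
  set t := x ⟨i, hi⟩
  have hshift : ∀ σ, |σ| ≤ δ → t + σ ∈ Icc 0 1 \ triflingReal K δ →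
      phiIter d δ g i (x + σ • e) ∈ Icc (f x - (B + ω)) (f x + (B + ω)) := by
    rintro σ hσ ⟨hσI, hσS⟩
    have hy : x + σ • e ∈ unitCube d := fun j => by
      rw [add_smul_single_apply]; split_ifs
      exacts [hσI, hx j]
    have hygood : ∀ j : Fin d, i ≤ j → (x + σ • e) j ∉ triflingReal K δ := fun j hj => by
      rw [add_smul_single_apply]; split_ifs with hj'
      exacts [hσS, hgood j (lt_of_le_of_ne hj fun h => hj' (Fin.ext h.symm))]
    have hdist : ‖x + σ • e - x‖ ≤ δ := by simpa [e, norm_smul] using hσ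
    rw [← mem_Icc_iff_abs_le, abs_sub_comm]
    calc |phiIter d δ g i (x + σ • e) - f x|
        ≤ |phiIter d δ g i (x + σ • e) - f (x + σ • e)| + |f (x + σ • e) - f x| :=
          abs_sub_le _ _ _
      _ ≤ B + ω := add_le_add (ih _ hy hygood) (hf _ hy x hx hdist)
  have hleft (h : t - δ ∈ Icc 0 1 \ triflingReal K δ) :=
    hshift (-δ) (by rw [abs_neg, abs_of_nonneg hδ₀]) (by rwa [← sub_eq_add_neg])
  have hcenter (h : t ∈ Icc 0 1 \ triflingReal K δ) :=
    hshift 0 (by rwa [abs_zero]) (by rwa [add_zero])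
  have hright (h : t + δ ∈ Icc 0 1 \ triflingReal K δ) :=
    hshift δ (abs_of_nonneg hδ₀).le h
  rw [phiIter_succ_of_lt hi, abs_sub_comm, mem_Icc_iff_abs_le]
  exact ordConnected_Icc.mid_mem <|
    (two_of_three_mem_Icc_diff_triflingReal hK hδ₀ hδ (hx ⟨i, hi⟩)).imp
      (And.imp hleft hcenter) (Or.imp (And.imp hleft hright) (And.imp hcenter hright))

theorem abs_phiIter_sub_le (hK : 0 < K) (hδ₀ : 0 ≤ δ) (hδ : 3 * δ ≤ 1 / K) {ε ω : ℝ}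
    (hf : ∀ x ∈ unitCube d, ∀ y ∈ unitCube d, ‖x - y‖ ≤ δ → |f x - f y| ≤ ω)
    (hg : ∀ x ∈ unitCube d \ trifling d K δ, |g x - f x| ≤ ε) {i : ℕ} (hi : i ≤ d)
    {x : EuclideanSpace ℝ (Fin d)} (hx : x ∈ unitCube d)
    (hgood : ∀ j : Fin d, i ≤ j → x j ∉ triflingReal K δ) :
    |phiIter d δ g i x - f x| ≤ ε + i * ω := by
  induction i generalizing x with
  | zero =>
    have hx' : x ∉ trifling d K δ := fun hmem => by
      obtain ⟨-, j, hj⟩ := mem_trifling.mp hmem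
      exact hgood j (Nat.zero_le _) hj
    simpa only [phiIter, Nat.cast_zero, zero_mul, add_zero] using hg x ⟨hx, hx'⟩
  | succ i ih =>
    have := abs_phiIter_succ_sub_le hK hδ₀ hδ hf hi
      (fun _ hy => ih (Nat.le_of_succ_le hi) hy) hx hgood
    rwa [Nat.cast_succ, add_one_mul, ← add_assoc]

end phiIter

theorem stmt_19_general (d K : ℕ) (hK : 0 < K) (δ : ℝ)
    (hδ : δ ∈ Set.Ioc 0 (1 / (3 * K : ℝ))) (ε : ℝ)
    (f : EuclideanSpace ℝ (Fin d) → ℝ) (hf : ContinuousOn f (unitCube d))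
    (g : EuclideanSpace ℝ (Fin d) → ℝ)
    (hg : ∀ x ∈ unitCube d \ trifling d K δ, |g x - f x| ≤ ε) :
    ∀ x ∈ unitCube d, |phiIter d δ g d x - f x| ≤ ε + d * modulus d f δ := by
  intro x hx
  have hδK : 3 * δ ≤ 1 / K := by
    rw [mul_comm, ← div_div] at hδ
    linarith [(le_div_iff₀ three_pos).mp hδ.2]
  exact abs_phiIter_sub_le hK hδ.1.le hδK (fun x hx y hy => abs_sub_le_modulus hf hx hy) hg
    le_rfl hx fun j hj => absurd j.isLt hj.not_gt

theorem stmt_19 (d K : ℕ) (hd : 0 < d) (hK : 0 < K) (δ : ℝ)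
    (hδ : δ ∈ Set.Ioc 0 (1 / (3 * K : ℝ))) (ε : ℝ) (hε : 0 < ε)
    (f : EuclideanSpace ℝ (Fin d) → ℝ) (hf : ContinuousOn f (unitCube d))
    (g : EuclideanSpace ℝ (Fin d) → ℝ)
    (hg : ∀ x ∈ unitCube d \ trifling d K δ, |g x - f x| ≤ ε) :
    ∀ x ∈ unitCube d, |phiIter d δ g d x - f x| ≤ ε + d * modulus d f δ :=
  stmt_19_general d K hK δ hδ ε f hf g hg
end
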